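/- Let U ⊆ ℝ² be an open set and f : U → ℝ a smooth function whose partial derivatives f_x and f_y are nowhere zero on U, and set ∂₁ = −(1/f_x)·∂/∂x, ∂₂ = −(1/f_y)·∂/∂y. Then for a smooth function t₁ : U → ℝ, the 1-form t₁·df is closed on U if and only if ∂₂(t₁) − ∂₁(t₁) = 0 on U. -/

import Mathlib

/-- Partial derivative with respect to the first coordinate. -/
noncomputable def pdx (f : ℝ × ℝ → ℝ) : ℝ × ℝ → ℝ :=
  fun q => deriv (fun t => f (t, q.2)) q.1

/-- Partial derivative with respect to the second coordinate. -/
noncomputable def pdy (f : ℝ × ℝ → ℝ) : ℝ × ℝ → ℝ :=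
  fun q => deriv (fun t => f (q.1, t)) q.2

/-- The vector field `∂₁ = -(1/f_x)·∂/∂x` applied to a function `p`. -/
noncomputable def D1 (f p : ℝ × ℝ → ℝ) : ℝ × ℝ → ℝ :=
  fun q => -(pdx p q) / pdx f q

/-- The vector field `∂₂ = -(1/f_y)·∂/∂y` applied to a function `p`. -/
noncomputable def D2 (f p : ℝ × ℝ → ℝ) : ℝ × ℝ → ℝ :=
  fun q => -(pdy p q) / pdy f q

/-- `H = f_{xy}/(f_x·f_y)`. -/
noncomputable def Hf (f : ℝ × ℝ → ℝ) : ℝ × ℝ → ℝ :=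
  fun q => pdy (pdx f) q / (pdx f q * pdy f q)

/-- A differential 1-form `a dx + c dy` on (an open subset of) `ℝ²`, recorded by its
pair of coefficient functions `(a, c)`. -/
abbrev Form1 : Type := (ℝ × ℝ → ℝ) × (ℝ × ℝ → ℝ)

/-- The coefficient of `dx ∧ dy` in the wedge product of two 1-forms. -/
noncomputable def wedge (α β : Form1) : ℝ × ℝ → ℝ :=
  fun q => α.1 q * β.2 q - α.2 q * β.1 q

/-- The coefficient of `dx ∧ dy` in the exterior derivative of a 1-form. -/
noncomputable def extd (α : Form1) : ℝ × ℝ → ℝ :=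
  fun q => pdx α.2 q - pdy α.1 q

/-- Multiplication of a 1-form by a function. -/
noncomputable def smul1 (s : ℝ × ℝ → ℝ) (α : Form1) : Form1 :=
  (fun q => s q * α.1 q, fun q => s q * α.2 q)

/-- The coordinate 1-form `dx`. -/
noncomputable def dX : Form1 := (fun _ => 1, fun _ => 0)

/-- The coordinate 1-form `dy`. -/
noncomputable def dY : Form1 := (fun _ => 0, fun _ => 1)

open Filter Topology


lemma pdx_eq_fderiv {g : ℝ × ℝ → ℝ} {q : ℝ × ℝ} (h : DifferentiableAt ℝ g q) :
    pdx g q = fderiv ℝ g q (1, 0) := by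
  have h1 : HasDerivAt (fun t : ℝ => ((t : ℝ), q.2)) ((1 : ℝ), (0 : ℝ)) q.1 := by
    simpa using ((hasDerivAt_id q.1).prodMk (hasDerivAt_const q.1 q.2))
  have h2 : HasFDerivAt g (fderiv ℝ g q) (q.1, q.2) := by
    simpa using h.hasFDerivAt
  have := h2.comp_hasDerivAt q.1 h1
  simpa [pdx, Function.comp_def] using this.deriv

lemma pdy_eq_fderiv {g : ℝ × ℝ → ℝ} {q : ℝ × ℝ} (h : DifferentiableAt ℝ g q) :
    pdy g q = fderiv ℝ g q (0, 1) := by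
  have h1 : HasDerivAt (fun t : ℝ => (q.1, (t : ℝ))) ((0 : ℝ), (1 : ℝ)) q.2 := by
    simpa using ((hasDerivAt_const q.2 q.1).prodMk (hasDerivAt_id q.2))
  have h2 : HasFDerivAt g (fderiv ℝ g q) (q.1, q.2) := by
    simpa using h.hasFDerivAt
  have := h2.comp_hasDerivAt q.2 h1
  simpa [pdy, Function.comp_def] using this.deriv

lemma pdx_congr {a b : ℝ × ℝ → ℝ} {q : ℝ × ℝ} (h : a =ᶠ[𝓝 q] b) :
    pdx a q = pdx b q := by
  have hc : Continuous (fun t : ℝ => ((t : ℝ), q.2)) := by continuity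
  have h' : (fun t : ℝ => a (t, q.2)) =ᶠ[𝓝 q.1] fun t => b (t, q.2) := by
    have : Tendsto (fun t : ℝ => ((t : ℝ), q.2)) (𝓝 q.1) (𝓝 q) := by
      have := hc.tendsto q.1
      simpa using this
    exact this.eventually h
  simpa [pdx] using h'.deriv_eq

lemma pdy_congr {a b : ℝ × ℝ → ℝ} {q : ℝ × ℝ} (h : a =ᶠ[𝓝 q] b) :
    pdy a q = pdy b q := by
  have hc : Continuous (fun t : ℝ => (q.1, (t : ℝ))) := by continuity
  have h' : (fun t : ℝ => a (q.1, t)) =ᶠ[𝓝 q.2] fun t => b (q.1, t) := by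
    have : Tendsto (fun t : ℝ => (q.1, (t : ℝ))) (𝓝 q.2) (𝓝 q) := by
      have := hc.tendsto q.2
      simpa using this
    exact this.eventually h
  simpa [pdy] using h'.deriv_eq



lemma key_lemma (U : Set (ℝ × ℝ)) (hU : IsOpen U)
    (f : ℝ × ℝ → ℝ) (hf : ContDiffOn ℝ (⊤ : ℕ∞) f U)
    (t₁ : ℝ × ℝ → ℝ) (ht₁ : ContDiffOn ℝ (⊤ : ℕ∞) t₁ U)
    (q : ℝ × ℝ) (hq : q ∈ U) :
    extd (smul1 t₁ (fun q => pdx f q, fun q => pdy f q)) q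
      = pdx t₁ q * pdy f q - pdy t₁ q * pdx f q := by
  have hUq : U ∈ 𝓝 q := hU.mem_nhds hq
  set F : ℝ × ℝ → (ℝ × ℝ) →L[ℝ] ℝ := fderiv ℝ f with hFdef
  have hfd : ∀ p ∈ U, DifferentiableAt ℝ f p := fun p hp =>
    (hf.contDiffAt (hU.mem_nhds hp)).differentiableAt (by simp)
  have ht₁d : DifferentiableAt ℝ t₁ q :=
    (ht₁.contDiffAt hUq).differentiableAt (by simp)
  have hF : ContDiffOn ℝ (⊤ : ℕ∞) F U := hf.fderiv_of_isOpen hU (by exact_mod_cast le_top)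
  have hFq : DifferentiableAt ℝ F q := (hF.contDiffAt hUq).differentiableAt (by simp)
  set g1 : ℝ × ℝ → ℝ := fun p => F p (1, 0) with hg1def
  set g2 : ℝ × ℝ → ℝ := fun p => F p (0, 1) with hg2def
  have hg1d : DifferentiableAt ℝ g1 q := hFq.clm_apply (differentiableAt_const _)
  have hg2d : DifferentiableAt ℝ g2 q := hFq.clm_apply (differentiableAt_const _)
  have hev1 : (fun p => t₁ p * pdx f p) =ᶠ[𝓝 q] fun p => t₁ p * g1 p := by
    filter_upwards [hUq] with p hp
    rw [pdx_eq_fderiv (hfd p hp)]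
  have hev2 : (fun p => t₁ p * pdy f p) =ᶠ[𝓝 q] fun p => t₁ p * g2 p := by
    filter_upwards [hUq] with p hp
    rw [pdy_eq_fderiv (hfd p hp)]
  -- second derivative symmetry
  have hhf : ∀ᶠ y in 𝓝 q, HasFDerivAt f (F y) y := by
    filter_upwards [hUq] with p hp using (hfd p hp).hasFDerivAt
  have hsymm : fderiv ℝ F q (1, 0) (0, 1) = fderiv ℝ F q (0, 1) (1, 0) :=
    second_derivative_symmetric_of_eventually hhf hFq.hasFDerivAt _ _
  -- fderiv of g1, g2
  have hg1f : fderiv ℝ g1 q (0, 1) = fderiv ℝ F q (0, 1) (1, 0) := by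
    rw [hg1def, fderiv_clm_apply hFq (differentiableAt_const _)]
    simp
  have hg2f : fderiv ℝ g2 q (1, 0) = fderiv ℝ F q (1, 0) (0, 1) := by
    rw [hg2def, fderiv_clm_apply hFq (differentiableAt_const _)]
    simp
  -- compute the two partial derivatives
  have h1 : pdx (fun p => t₁ p * pdy f p) q
      = pdx t₁ q * g2 q + t₁ q * fderiv ℝ F q (1, 0) (0, 1) := by
    rw [pdx_congr hev2, pdx_eq_fderiv (ht₁d.fun_mul hg2d), fderiv_fun_mul ht₁d hg2d,
      pdx_eq_fderiv ht₁d]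
    simp [← hg2f]
    ring
  have h2 : pdy (fun p => t₁ p * pdx f p) q
      = pdy t₁ q * g1 q + t₁ q * fderiv ℝ F q (0, 1) (1, 0) := by
    rw [pdy_congr hev1, pdy_eq_fderiv (ht₁d.fun_mul hg1d), fderiv_fun_mul ht₁d hg1d,
      pdy_eq_fderiv ht₁d]
    simp [← hg1f]
    ring
  have hx : pdx f q = g1 q := pdx_eq_fderiv (hfd q hq)
  have hy : pdy f q = g2 q := pdy_eq_fderiv (hfd q hq)
  simp only [extd, smul1]
  rw [h1, h2, hsymm, hx, hy]
  ring

/-- the third Samuelson equation: the 1-form `t₁·df` is closed on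
`U` if and only if `∂₂(t₁) - ∂₁(t₁) = 0` on `U`. -/
theorem third_samuelson_equation
    (U : Set (ℝ × ℝ)) (hU : IsOpen U)
    (f : ℝ × ℝ → ℝ) (hf : ContDiffOn ℝ (⊤ : ℕ∞) f U)
    (hfx : ∀ q ∈ U, pdx f q ≠ 0) (hfy : ∀ q ∈ U, pdy f q ≠ 0)
    (t₁ : ℝ × ℝ → ℝ) (ht₁ : ContDiffOn ℝ (⊤ : ℕ∞) t₁ U) :
    (∀ q ∈ U, extd (smul1 t₁ (fun q => pdx f q, fun q => pdy f q)) q = 0) ↔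
      (∀ q ∈ U, D2 f t₁ q - D1 f t₁ q = 0) := by
  have key := key_lemma U hU f hf t₁ ht₁
  constructor
  · intro h q hq
    have h0 := h q hq
    rw [key q hq] at h0
    simp only [D1, D2]
    have hx := hfx q hq
    have hy := hfy q hq
    field_simp
    linarith [h0]
  · intro h q hq
    have h0 := h q hq
    simp only [D1, D2] at h0
    rw [key q hq]
    have hx := hfx q hq
    have hy := hfy q hq
    field_simp at h0
    linarith [h0]
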